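/- arXiv:1508.04310 — 3 statements merged into one kernel-verified Lean document; each statement's English description precedes it below -/
import Mathlib

section
/- Let f₀ be differentiable with L₀-Lipschitz gradient, and suppose ‖∇f₀(p*)‖ ≤ D₀. Then for any p, |f₀(p) - f₀(p*)| ≤ D₀‖p - p*‖ + (L₀/2)‖p - p*‖². Consequently, if f = f₀ + ρψ is μ₀-strongly convex with minimizer p* and |f(p) - f(p*)| ≤ ε, then |f₀(p) - f₀(p*)| ≤ D₀√(2ε/μ₀) + (L₀/2)(2ε/μ₀). -/
/-!
The first bound is the quadratic upper bound of `f₀` at `p*` combined with Cauchy–Schwarz on the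
linear term. For the second, the gradient of `f` vanishes at its minimizer, so strong convexity at
`p*` reads `μ₀/2 ‖p - p*‖² ≤ f p - f p* ≤ ε`, and the first bound is monotone in `‖p - p*‖`.
-/

open RealInnerProductSpace

section
variable {E : Type*} [NormedAddCommGroup E] [InnerProductSpace ℝ E]

theorem IsLocalMin.hasGradientAt_eq_zero [CompleteSpace E] {f : E → ℝ} {g x : E}
    (hmin : IsLocalMin f x) (hg : HasGradientAt f g x) : g = 0 :=
  (InnerProductSpace.toDual ℝ E).map_eq_zero_iff.mp (hmin.hasFDerivAt_eq_zero hg)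

theorem abs_sub_le_of_abs_sub_inner_le {f : E → ℝ} {g x y : E} {D L : ℝ}
    (hquad : |f y - f x - ⟪g, y - x⟫| ≤ L / 2 * ‖y - x‖ ^ 2) (hg : ‖g‖ ≤ D) :
    |f y - f x| ≤ D * ‖y - x‖ + L / 2 * ‖y - x‖ ^ 2 := by
  have hinner : |⟪g, y - x⟫| ≤ D * ‖y - x‖ :=
    (abs_real_inner_le_norm g (y - x)).trans (by gcongr)
  calc |f y - f x| = |⟪g, y - x⟫ + (f y - f x - ⟪g, y - x⟫)| := by ring_nf
    _ ≤ |⟪g, y - x⟫| + |f y - f x - ⟪g, y - x⟫| := abs_add_le _ _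
    _ ≤ D * ‖y - x‖ + L / 2 * ‖y - x‖ ^ 2 := add_le_add hinner hquad

theorem IsLocalMin.mul_sq_norm_sub_le [CompleteSpace E] {f : E → ℝ} {g x y : E} {μ : ℝ}
    (hmin : IsLocalMin f x) (hg : HasGradientAt f g x)
    (hsc : f x + ⟪g, y - x⟫ + μ / 2 * ‖y - x‖ ^ 2 ≤ f y) :
    μ / 2 * ‖y - x‖ ^ 2 ≤ f y - f x := by
  rw [hmin.hasGradientAt_eq_zero hg, inner_zero_left] at hsc
  linarith

end

theorem stmt2_general {n : ℕ} (f₀ : EuclideanSpace ℝ (Fin n) → ℝ)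
    (g₀ gf : EuclideanSpace ℝ (Fin n) → EuclideanSpace ℝ (Fin n))
    (L₀ μ₀ D₀ ε : ℝ) (hL₀ : 0 ≤ L₀) (hμ₀ : 0 < μ₀)
    (hF : ∀ p₁ p₂, |f₀ p₂ - f₀ p₁ - ⟪g₀ p₁, p₂ - p₁⟫| ≤ L₀ / 2 * ‖p₂ - p₁‖ ^ 2)
    (f : EuclideanSpace ℝ (Fin n) → ℝ)
    (hdifff : ∀ p, HasGradientAt f (gf p) p)
    (hsc : ∀ p₁ p₂, f p₁ + ⟪gf p₁, p₂ - p₁⟫ + μ₀ / 2 * ‖p₂ - p₁‖ ^ 2 ≤ f p₂)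
    (pstar : EuclideanSpace ℝ (Fin n)) (hmin : ∀ p, f pstar ≤ f p)
    (hD₀ : ‖g₀ pstar‖ ≤ D₀) :
    (∀ p, |f₀ p - f₀ pstar| ≤ D₀ * ‖p - pstar‖ + L₀ / 2 * ‖p - pstar‖ ^ 2) ∧
    (∀ p, |f p - f pstar| ≤ ε →
      |f₀ p - f₀ pstar| ≤ D₀ * Real.sqrt (2 * ε / μ₀) + L₀ / 2 * (2 * ε / μ₀)) := by
  have hf₀ p := abs_sub_le_of_abs_sub_inner_le (hF pstar p) hD₀
  refine ⟨hf₀, fun p hp => ?_⟩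
  have hsq : ‖p - pstar‖ ^ 2 ≤ 2 * ε / μ₀ := by
    have hmin_loc : IsLocalMin f pstar := IsMinOn.isLocalMin (fun p _ => hmin p) Filter.univ_mem
    have := hmin_loc.mul_sq_norm_sub_le (hdifff pstar) (hsc pstar p)
    rw [le_div_iff₀ hμ₀]
    linarith [le_abs_self (f p - f pstar)]
  have hD₀_nonneg : 0 ≤ D₀ := (norm_nonneg _).trans hD₀
  calc |f₀ p - f₀ pstar| ≤ D₀ * ‖p - pstar‖ + L₀ / 2 * ‖p - pstar‖ ^ 2 := hf₀ p
    _ ≤ D₀ * Real.sqrt (2 * ε / μ₀) + L₀ / 2 * (2 * ε / μ₀) := by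
      gcongr
      exact Real.le_sqrt_of_sq_le hsq

/-- If `f₀` has an `L₀`-Lipschitz gradient (encoded by the quadratic bound
`|f₀ p₂ - f₀ p₁ - ⟪∇f₀ p₁, p₂ - p₁⟫| ≤ L₀/2 ‖p₂ - p₁‖²`) and `‖∇f₀(pstar)‖ ≤ D₀`, then
`|f₀ p - f₀ pstar| ≤ D₀ ‖p - pstar‖ + (L₀/2)‖p - pstar‖²`; consequently if
`f = f₀ + ρ ψ` is `μ₀`-strongly convex with minimizer `pstar` and `|f p - f pstar| ≤ ε`
then `|f₀ p - f₀ pstar| ≤ D₀ √(2ε/μ₀) + (L₀/2)(2ε/μ₀)`. -/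
theorem stmt2 {n : ℕ} (f₀ ψ : EuclideanSpace ℝ (Fin n) → ℝ)
    (g₀ gf : EuclideanSpace ℝ (Fin n) → EuclideanSpace ℝ (Fin n))
    (L₀ μ₀ ρ D₀ ε : ℝ) (hL₀ : 0 ≤ L₀) (hμ₀ : 0 < μ₀) (hρ : 0 < ρ) (hε : 0 ≤ ε)
    (hdiff₀ : ∀ p, HasGradientAt f₀ (g₀ p) p)
    (hF : ∀ p₁ p₂, |f₀ p₂ - f₀ p₁ - ⟪g₀ p₁, p₂ - p₁⟫| ≤ L₀ / 2 * ‖p₂ - p₁‖ ^ 2)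
    (hψ : ∀ p, 0 ≤ ψ p)
    (f : EuclideanSpace ℝ (Fin n) → ℝ) (hf : ∀ p, f p = f₀ p + ρ * ψ p)
    (hdifff : ∀ p, HasGradientAt f (gf p) p)
    (hsc : ∀ p₁ p₂, f p₁ + ⟪gf p₁, p₂ - p₁⟫ + μ₀ / 2 * ‖p₂ - p₁‖ ^ 2 ≤ f p₂)
    (pstar : EuclideanSpace ℝ (Fin n)) (hmin : ∀ p, f pstar ≤ f p)
    (hD₀ : ‖g₀ pstar‖ ≤ D₀) :
    (∀ p, |f₀ p - f₀ pstar| ≤ D₀ * ‖p - pstar‖ + L₀ / 2 * ‖p - pstar‖ ^ 2) ∧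
    (∀ p, |f p - f pstar| ≤ ε →
      |f₀ p - f₀ pstar| ≤ D₀ * Real.sqrt (2 * ε / μ₀) + L₀ / 2 * (2 * ε / μ₀)) :=
  stmt2_general f₀ g₀ gf L₀ μ₀ D₀ ε hL₀ hμ₀ hF f hdifff hsc pstar hmin hD₀
end

section
/- Under the hypotheses above, if additionally f₀ has L₀-Lipschitz gradient, then ‖∇f₀(p*)‖ ≤ L₀√((2ρ/μ₀)ψ(p_u)). -/
open RealInnerProductSpace

theorem quadratic_growth_of_gradient_eq_zero {E : Type*} [NormedAddCommGroup E]
    [InnerProductSpace ℝ E] {f : E → ℝ} {g : E → E} {μ : ℝ}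
    (hsc : ∀ p₁ p₂, f p₁ + ⟪g p₁, p₂ - p₁⟫ + μ / 2 * ‖p₂ - p₁‖ ^ 2 ≤ f p₂)
    {pu : E} (hpu : g pu = 0) (p : E) :
    f pu + μ / 2 * ‖p - pu‖ ^ 2 ≤ f p := by
  simpa [hpu] using hsc pu p

theorem norm_sub_le_sqrt_of_penalized_min {E : Type*} [SeminormedAddCommGroup E]
    {f ψ : E → ℝ} {μ ρ : ℝ} {pu pstar : E} (hμ : 0 < μ) (hρ : 0 ≤ ρ) (hψ : 0 ≤ ψ pstar)
    (hgrowth : f pu + μ / 2 * ‖pstar - pu‖ ^ 2 ≤ f pstar)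
    (hmin : f pstar + ρ * ψ pstar ≤ f pu + ρ * ψ pu) :
    ‖pstar - pu‖ ≤ Real.sqrt (2 * ρ / μ * ψ pu) := by
  have hpenalty : 0 ≤ ρ * ψ pstar := mul_nonneg hρ hψ
  apply Real.le_sqrt_of_sq_le
  rw [div_mul_eq_mul_div, le_div_iff₀ hμ]
  linarith

theorem stmt6_general {n : ℕ} (f₀ ψ : EuclideanSpace ℝ (Fin n) → ℝ)
    (g₀ : EuclideanSpace ℝ (Fin n) → EuclideanSpace ℝ (Fin n))
    (μ₀ ρ L₀ : ℝ) (hμ₀ : 0 < μ₀) (hρ : 0 < ρ) (hL₀ : 0 ≤ L₀)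
    (hsc : ∀ p₁ p₂, f₀ p₁ + ⟪g₀ p₁, p₂ - p₁⟫ + μ₀ / 2 * ‖p₂ - p₁‖ ^ 2 ≤ f₀ p₂)
    (hlip : ∀ p₁ p₂, ‖g₀ p₁ - g₀ p₂‖ ≤ L₀ * ‖p₁ - p₂‖)
    (hψ : ∀ p, 0 ≤ ψ p)
    (pu : EuclideanSpace ℝ (Fin n)) (hpu : g₀ pu = 0)
    (pstar : EuclideanSpace ℝ (Fin n))
    (hmin : ∀ p, f₀ pstar + ρ * ψ pstar ≤ f₀ p + ρ * ψ p) :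
    ‖g₀ pstar‖ ≤ L₀ * Real.sqrt (2 * ρ / μ₀ * ψ pu) := by
  have hdist : ‖pstar - pu‖ ≤ Real.sqrt (2 * ρ / μ₀ * ψ pu) :=
    norm_sub_le_sqrt_of_penalized_min hμ₀ hρ.le (hψ pstar)
      (quadratic_growth_of_gradient_eq_zero hsc hpu pstar) (hmin pu)
  calc ‖g₀ pstar‖ = ‖g₀ pstar - g₀ pu‖ := by rw [hpu, sub_zero]
    _ ≤ L₀ * ‖pstar - pu‖ := hlip pstar pu
    _ ≤ L₀ * Real.sqrt (2 * ρ / μ₀ * ψ pu) := mul_le_mul_of_nonneg_left hdist hL₀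

/-- Under the hypotheses of the previous statement, if additionally `∇f₀` is
`L₀`-Lipschitz, then `‖∇f₀(pstar)‖ ≤ L₀ √((2ρ/μ₀) ψ(p_u))`. -/
theorem stmt6 {n : ℕ} (f₀ ψ : EuclideanSpace ℝ (Fin n) → ℝ)
    (g₀ : EuclideanSpace ℝ (Fin n) → EuclideanSpace ℝ (Fin n))
    (μ₀ ρ L₀ : ℝ) (hμ₀ : 0 < μ₀) (hρ : 0 < ρ) (hL₀ : 0 ≤ L₀)
    (hdiff : ∀ p, HasGradientAt f₀ (g₀ p) p)
    (hsc : ∀ p₁ p₂, f₀ p₁ + ⟪g₀ p₁, p₂ - p₁⟫ + μ₀ / 2 * ‖p₂ - p₁‖ ^ 2 ≤ f₀ p₂)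
    (hlip : ∀ p₁ p₂, ‖g₀ p₁ - g₀ p₂‖ ≤ L₀ * ‖p₁ - p₂‖)
    (hψ : ∀ p, 0 ≤ ψ p)
    (pu : EuclideanSpace ℝ (Fin n)) (hpu : g₀ pu = 0)
    (pstar : EuclideanSpace ℝ (Fin n))
    (hmin : ∀ p, f₀ pstar + ρ * ψ pstar ≤ f₀ p + ρ * ψ p) :
    ‖g₀ pstar‖ ≤ L₀ * Real.sqrt (2 * ρ / μ₀ * ψ pu) :=
  stmt6_general f₀ ψ g₀ μ₀ ρ L₀ hμ₀ hρ hL₀ hsc hlip hψ pu hpu pstar hmin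
end

section
/- Let p^{opt} minimize f₀ over the admissible set {ψ = 0}, let p* minimize f = f₀ + ρψ, let p_ψ be the closest admissible point to p*, and suppose ‖∇f₀(p*)‖ ≤ D₀, f₀ has L₀-Lipschitz gradient, and ψ(p) ≥ β·d(p, {ψ=0})² for all p with β > 0. Then |f₀(p^{opt}) - f₀(p*)| ≤ D₀√(ψ(p*)/β) + (L₀/2)(ψ(p*)/β). -/
/-!
The penalty `ρψ` is nonnegative and vanishes on the admissible set, so the unconstrained
minimizer `p*` does at least as well as `p^{opt}`. Conversely `p^{opt}` does at most as well as
the projection `p_ψ` of `p*`, and the descent lemma at `p*` bounds `f₀(p_ψ) - f₀(p*)` by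
`D₀ d + (L₀/2) d²` with `d = ‖p_ψ - p*‖`; coercivity of `ψ` gives `d² ≤ ψ(p*)/β`.
-/

open RealInnerProductSpace

theorem le_of_add_penalty_le {α : Type*} {f ψ : α → ℝ} {ρ : ℝ} {x y : α}
    (hρ : 0 ≤ ρ) (hψx : 0 ≤ ψ x) (hψy : ψ y = 0) (h : f x + ρ * ψ x ≤ f y + ρ * ψ y) :
    f x ≤ f y := by
  rw [hψy, mul_zero, add_zero] at h
  linarith [mul_nonneg hρ hψx]

theorem le_add_norm_mul_of_le_add_inner {E : Type*} [NormedAddCommGroup E]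
    [InnerProductSpace ℝ E] {f : E → ℝ} {g x y : E} {L D : ℝ}
    (hf : f y ≤ f x + ⟪g, y - x⟫ + L / 2 * ‖y - x‖ ^ 2) (hg : ‖g‖ ≤ D) :
    f y ≤ f x + D * ‖y - x‖ + L / 2 * ‖y - x‖ ^ 2 := by
  have hinner : ⟪g, y - x⟫ ≤ D * ‖y - x‖ :=
    (real_inner_le_norm g (y - x)).trans (mul_le_mul_of_nonneg_right hg (norm_nonneg _))
  linarith

theorem mul_add_mul_sq_le_of_sq_le {D L d s : ℝ} (hD : 0 ≤ D) (hL : 0 ≤ L) (hds : d ^ 2 ≤ s) :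
    D * d + L / 2 * d ^ 2 ≤ D * √s + L / 2 * s := by
  have hd_sqrt : d ≤ √s := Real.le_sqrt_of_sq_le hds
  gcongr

theorem stmt9_general {n : ℕ} (f₀ ψ : EuclideanSpace ℝ (Fin n) → ℝ)
    (g₀ : EuclideanSpace ℝ (Fin n) → EuclideanSpace ℝ (Fin n))
    (ρ L₀ D₀ β : ℝ) (hρ : 0 < ρ) (hL₀ : 0 ≤ L₀) (hβ : 0 < β)
    (hF : ∀ p₁ p₂, f₀ p₂ ≤ f₀ p₁ + ⟪g₀ p₁, p₂ - p₁⟫ + L₀ / 2 * ‖p₂ - p₁‖ ^ 2)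
    (hψ : ∀ p, 0 ≤ ψ p)
    (A : Set (EuclideanSpace ℝ (Fin n))) (hA : A = {p | ψ p = 0})
    (hcoerc : ∀ p, β * (Metric.infDist p A) ^ 2 ≤ ψ p)
    (popt : EuclideanSpace ℝ (Fin n)) (hpoptA : popt ∈ A)
    (hpopt : ∀ p ∈ A, f₀ popt ≤ f₀ p)
    (pstar : EuclideanSpace ℝ (Fin n))
    (hmin : ∀ p, f₀ pstar + ρ * ψ pstar ≤ f₀ p + ρ * ψ p)
    (pψ : EuclideanSpace ℝ (Fin n)) (hpψA : pψ ∈ A)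
    (hpψ : ‖pstar - pψ‖ = Metric.infDist pstar A)
    (hD₀ : ‖g₀ pstar‖ ≤ D₀) :
    |f₀ popt - f₀ pstar| ≤
      D₀ * Real.sqrt (ψ pstar / β) + L₀ / 2 * (ψ pstar / β) := by
  have hψopt : ψ popt = 0 := by rwa [hA] at hpoptA
  have hlower : f₀ pstar ≤ f₀ popt := le_of_add_penalty_le hρ.le (hψ pstar) hψopt (hmin popt)
  have hdist : ‖pψ - pstar‖ ^ 2 ≤ ψ pstar / β := by
    rw [norm_sub_rev, hpψ, le_div_iff₀' hβ]
    exact hcoerc pstar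
  have hupper : f₀ popt ≤ f₀ pstar + D₀ * ‖pψ - pstar‖ + L₀ / 2 * ‖pψ - pstar‖ ^ 2 :=
    (hpopt pψ hpψA).trans (le_add_norm_mul_of_le_add_inner (hF pstar pψ) hD₀)
  have hgap := mul_add_mul_sq_le_of_sq_le ((norm_nonneg _).trans hD₀) hL₀ hdist
  rw [abs_of_nonneg (sub_nonneg.mpr hlower)]
  linarith

/-- Let `popt` minimize `f₀` over the admissible set `A = {ψ = 0}`, `pstar` minimize
`f₀ + ρψ`, `pψ` the closest admissible point to `pstar`. If `‖∇f₀(pstar)‖ ≤ D₀`,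
`f₀ ∈ F¹_{L₀}` and `ψ(p) ≥ β d(p, A)²`, then
`|f₀(popt) - f₀(pstar)| ≤ D₀ √(ψ(pstar)/β) + (L₀/2)(ψ(pstar)/β)`. -/
theorem stmt9 {n : ℕ} (f₀ ψ : EuclideanSpace ℝ (Fin n) → ℝ)
    (g₀ : EuclideanSpace ℝ (Fin n) → EuclideanSpace ℝ (Fin n))
    (ρ L₀ D₀ β : ℝ) (hρ : 0 < ρ) (hL₀ : 0 ≤ L₀) (hβ : 0 < β)
    (hdiff : ∀ p, HasGradientAt f₀ (g₀ p) p)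
    (hF : ∀ p₁ p₂, f₀ p₂ ≤ f₀ p₁ + ⟪g₀ p₁, p₂ - p₁⟫ + L₀ / 2 * ‖p₂ - p₁‖ ^ 2)
    (hψ : ∀ p, 0 ≤ ψ p)
    (A : Set (EuclideanSpace ℝ (Fin n))) (hA : A = {p | ψ p = 0})
    (hcoerc : ∀ p, β * (Metric.infDist p A) ^ 2 ≤ ψ p)
    (popt : EuclideanSpace ℝ (Fin n)) (hpoptA : popt ∈ A)
    (hpopt : ∀ p ∈ A, f₀ popt ≤ f₀ p)
    (pstar : EuclideanSpace ℝ (Fin n))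
    (hmin : ∀ p, f₀ pstar + ρ * ψ pstar ≤ f₀ p + ρ * ψ p)
    (pψ : EuclideanSpace ℝ (Fin n)) (hpψA : pψ ∈ A)
    (hpψ : ‖pstar - pψ‖ = Metric.infDist pstar A)
    (hD₀ : ‖g₀ pstar‖ ≤ D₀) :
    |f₀ popt - f₀ pstar| ≤
      D₀ * Real.sqrt (ψ pstar / β) + L₀ / 2 * (ψ pstar / β) :=
  stmt9_general f₀ ψ g₀ ρ L₀ D₀ β hρ hL₀ hβ hF hψ A hA hcoerc popt hpoptA hpopt pstar hmin pψ hpψA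
    hpψ hD₀
end
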